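/- arXiv:1802.09809 — 7 statements merged into one kernel-verified Lean document; each statement's English description precedes it below -/
import Mathlib

section
/- Let t ∈ (0,∞] and let h be a real-valued function defined on [0,t] ∩ [0,∞). Suppose that for every s ∈ (0,t) at least one of the following holds: the lower left Dini derivative liminf_{τ→0+} (h(s) − h(s−τ))/τ is ≥ 0, or the lower right Dini derivative liminf_{τ→0+} (h(s+τ) − h(s))/τ is ≥ 0. Suppose additionally that h is right lower semicontinuous at every point of [0,t) and left upper semicontinuous at every point of (0,t] ∩ [0,∞). Then h is monotone nondecreasing on [0,t] ∩ [0,∞). -/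
open Filter Topology ENNReal

/-- Let `t ∈ (0,∞]` and let `h` be real-valued on `[0,t] ∩ [0,∞)`.
If for every `s ∈ (0,t)` the lower left Dini derivative or the lower right Dini
derivative of `h` at `s` is `≥ 0`, and if `h` is right lower semicontinuous on `[0,t)`
and left upper semicontinuous on `(0,t] ∩ [0,∞)`, then `h` is monotone nondecreasing
on `[0,t] ∩ [0,∞)`. -/
theorem stmt_0 (t : ℝ≥0∞) (ht : 0 < t) (h : ℝ → ℝ)
    (hdini : ∀ s : ℝ, 0 < s → ENNReal.ofReal s < t →
      (0 : EReal) ≤ Filter.liminf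
          (fun τ : ℝ => (((h s - h (s - τ)) / τ : ℝ) : EReal)) (𝓝[>] (0 : ℝ)) ∨
      (0 : EReal) ≤ Filter.liminf
          (fun τ : ℝ => (((h (s + τ) - h s) / τ : ℝ) : EReal)) (𝓝[>] (0 : ℝ)))
    (hrlsc : ∀ s : ℝ, 0 ≤ s → ENNReal.ofReal s < t →
      (h s : EReal) ≤ Filter.liminf (fun σ : ℝ => (h σ : EReal)) (𝓝[>] s))
    (hlusc : ∀ s : ℝ, 0 < s → ENNReal.ofReal s ≤ t →
      Filter.limsup (fun σ : ℝ => (h σ : EReal)) (𝓝[<] s) ≤ (h s : EReal)) :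
    ∀ s₁ s₂ : ℝ, 0 ≤ s₁ → s₁ ≤ s₂ → ENNReal.ofReal s₂ ≤ t → h s₁ ≤ h s₂ := by
  intro s₁ s₂ hs₁ h₁₂ hs₂t
  rcases eq_or_lt_of_le h₁₂ with rfl | hlt
  · exact le_rfl
  by_contra hcon
  push_neg at hcon
  have hs₂pos : 0 < s₂ := lt_of_le_of_lt hs₁ hlt
  obtain ⟨ε, hεdef⟩ : ∃ ε : ℝ, ε = (h s₁ - h s₂) / (2 * (s₂ - s₁)) := ⟨_, rfl⟩
  have hε : 0 < ε := hεdef ▸ div_pos (by linarith) (by linarith)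
  have hεeq : ε * (s₂ - s₁) = (h s₁ - h s₂) / 2 := by
    rw [hεdef, div_mul_eq_mul_div, div_eq_div_iff (by nlinarith) (by norm_num : (2:ℝ) ≠ 0)]
    ring
  obtain ⟨g, hgdef⟩ : ∃ g : ℝ → ℝ, g = fun x => h x + ε * x := ⟨_, rfl⟩
  have hg21 : g s₂ < g s₁ := by
    simp only [hgdef]
    nlinarith [hεeq]
  have hofw_lt : ∀ w : ℝ, w < s₂ → ENNReal.ofReal w < t := fun w hw =>
    lt_of_lt_of_le (by rwa [ENNReal.ofReal_lt_ofReal_iff hs₂pos]) hs₂t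
  have hofw_le : ∀ w : ℝ, w ≤ s₂ → ENNReal.ofReal w ≤ t := fun w hw =>
    le_trans (ENNReal.ofReal_le_ofReal hw) hs₂t
  -- L1 : translation of the Dini hypothesis to `g`
  have L1 : ∀ w : ℝ, 0 < w → w < s₂ →
      (∀ᶠ τ in 𝓝[>] (0:ℝ), g (w - τ) < g w) ∨
      (∀ᶠ τ in 𝓝[>] (0:ℝ), g w + ε / 2 * τ < g (w + τ)) := by
    intro w hw0 hws
    have hτpos : ∀ᶠ τ in 𝓝[>] (0:ℝ), 0 < τ := self_mem_nhdsWithin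
    have hneg : ((-(ε/2) : ℝ) : EReal) < (0 : EReal) := by
      norm_cast; linarith
    rcases hdini w hw0 (hofw_lt w hws) with hd | hd
    · left
      have h1 : ∀ᶠ τ in 𝓝[>] (0:ℝ),
          ((-(ε/2) : ℝ) : EReal) < (((h w - h (w - τ)) / τ : ℝ) : EReal) :=
        eventually_lt_of_lt_liminf (lt_of_lt_of_le hneg hd)
      filter_upwards [h1, hτpos] with τ h1 hτ
      rw [EReal.coe_lt_coe_iff] at h1
      have h2 : -(ε/2) * τ < h w - h (w - τ) := (lt_div_iff₀ hτ).mp h1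
      simp only [hgdef]
      nlinarith
    · right
      have h1 : ∀ᶠ τ in 𝓝[>] (0:ℝ),
          ((-(ε/2) : ℝ) : EReal) < (((h (w + τ) - h w) / τ : ℝ) : EReal) :=
        eventually_lt_of_lt_liminf (lt_of_lt_of_le hneg hd)
      filter_upwards [h1, hτpos] with τ h1 hτ
      rw [EReal.coe_lt_coe_iff] at h1
      have h2 : -(ε/2) * τ < h (w + τ) - h w := (lt_div_iff₀ hτ).mp h1
      simp only [hgdef]
      nlinarith
  -- L2 : right lower semicontinuity for `g`
  have L2 : ∀ w c : ℝ, 0 ≤ w → w < s₂ → (∃ᶠ σ in 𝓝[>] w, g σ ≤ c) → g w ≤ c := by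
    intro w c hw0 hws hfreq
    have hσ : ∀ᶠ σ in 𝓝[>] w, w < σ := self_mem_nhdsWithin
    have hfreq' : ∃ᶠ σ in 𝓝[>] w, ((h σ : ℝ) : EReal) ≤ ((c - ε * w : ℝ) : EReal) := by
      apply (hfreq.and_eventually hσ).mono
      rintro σ ⟨h1, h2⟩
      rw [EReal.coe_le_coe_iff]
      simp only [hgdef] at h1
      nlinarith
    have hle := Filter.liminf_le_of_frequently_le' hfreq'
    have hfin := le_trans (hrlsc w hw0 (hofw_lt w hws)) hle
    rw [EReal.coe_le_coe_iff] at hfin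
    simp only [hgdef]; linarith
  -- L3 : left upper semicontinuity for `g`
  have L3 : ∀ w c : ℝ, s₁ < w → w ≤ s₂ → (∀ x, s₁ ≤ x → x < w → c < g x) → c ≤ g w := by
    intro w c hsw hws hall
    have hmem : Set.Ioo s₁ w ∈ 𝓝[<] w := Ioo_mem_nhdsLT_of_mem ⟨hsw, le_rfl⟩
    have hev : ∀ᶠ σ in 𝓝[<] w, ((c - ε * w : ℝ) : EReal) ≤ ((h σ : ℝ) : EReal) := by
      filter_upwards [hmem] with σ hσ
      rw [EReal.coe_le_coe_iff]
      have hx := hall σ hσ.1.le hσ.2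
      simp only [hgdef] at hx
      nlinarith [hσ.2]
    have hfreq := hev.frequently
    have hfin := le_trans (Filter.le_limsup_of_frequently_le' hfreq)
      (hlusc w (lt_of_le_of_lt hs₁ hsw) (hofw_le w hws))
    rw [EReal.coe_le_coe_iff] at hfin
    simp only [hgdef]; linarith
  -- key construction
  have key : ∀ c : ℝ, g s₂ < c → c < g s₁ →
      ∃ w δ : ℝ, 0 < δ ∧ s₁ < w ∧ (∀ x, s₁ ≤ x → x < w → c < g x) ∧ g w = c ∧
        ∀ τ, 0 < τ → τ < δ → c < g (w + τ) := by
    intro c hc2 hc1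
    classical
    set B : Set ℝ := {x | x ∈ Set.Icc s₁ s₂ ∧ g x ≤ c} with hB
    have hs₂B : s₂ ∈ B := ⟨⟨h₁₂, le_rfl⟩, hc2.le⟩
    have hBne : B.Nonempty := ⟨s₂, hs₂B⟩
    have hBbdd : BddBelow B := ⟨s₁, fun x hx => hx.1.1⟩
    set w := sInf B with hwdef
    have hw1 : s₁ ≤ w := le_csInf hBne (fun x hx => hx.1.1)
    have hw2 : w ≤ s₂ := csInf_le hBbdd hs₂B
    have hlow : ∀ x, s₁ ≤ x → x < w → c < g x := by
      intro x hx hxw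
      by_contra hgx
      push_neg at hgx
      have hxB : x ∈ B := ⟨⟨hx, hxw.le.trans hw2⟩, hgx⟩
      exact absurd (csInf_le hBbdd hxB) (not_le.2 hxw)
    have hgwle : g w ≤ c := by
      by_cases hwB : w ∈ B
      · exact hwB.2
      have hw2' : w < s₂ := lt_of_le_of_ne hw2 (fun he => hwB (he ▸ hs₂B))
      refine L2 w c (le_trans hs₁ hw1) hw2' ?_
      rw [(nhdsGT_basis w).frequently_iff]
      intro i hi
      by_contra hno
      push_neg at hno
      have hiw : i ≤ w := by
        refine le_csInf hBne ?_
        intro b hb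
        by_contra hbi
        push_neg at hbi
        have hwb : w ≤ b := csInf_le hBbdd hb
        have hwb' : w ≠ b := fun he => hwB (he ▸ hb)
        exact absurd hb.2 (not_le.2 (hno b ⟨lt_of_le_of_ne hwb hwb', hbi⟩))
      exact absurd hi (not_lt.2 hiw)
    have hsw : s₁ < w := by
      rcases eq_or_lt_of_le hw1 with he | hgt
      · exfalso; rw [← he] at hgwle; linarith
      · exact hgt
    have hgwge : c ≤ g w := L3 w c hsw hw2 hlow
    have hgw : g w = c := le_antisymm hgwle hgwge
    have hwlt2 : w < s₂ := by
      rcases eq_or_lt_of_le hw2 with he | hgt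
      · exfalso; rw [he] at hgw; rw [hgw] at hc2; exact lt_irrefl _ hc2
      · exact hgt
    rcases L1 w (lt_of_le_of_lt hs₁ hsw) hwlt2 with hL | hR
    · exfalso
      have hmem : Set.Ioo (0:ℝ) (w - s₁) ∈ 𝓝[>] (0:ℝ) :=
        Ioo_mem_nhdsGT_of_mem ⟨le_rfl, by linarith⟩
      rcases (hL.and (eventually_of_mem hmem (fun τ hτ => hτ))).exists
        with ⟨τ, h1, h2⟩
      have h3 := hlow (w - τ) (by linarith [h2.2]) (by linarith [h2.1])
      rw [hgw] at h1
      linarith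
    · rw [(nhdsGT_basis (0:ℝ)).eventually_iff] at hR
      rcases hR with ⟨δ, hδ, hδ'⟩
      refine ⟨w, δ, hδ, hsw, hlow, hgw, ?_⟩
      intro τ hτ0 hτδ
      have h4 := hδ' ⟨hτ0, hτδ⟩
      rw [hgw] at h4
      have h5 : (0:ℝ) < ε / 2 * τ := mul_pos (half_pos hε) hτ0
      linarith
  -- choose the witnesses
  choose w δ hδ hsw hlow hgw hup using key
  have hrat : ∀ (c : ℝ) (h2 : g s₂ < c) (h1 : c < g s₁), ∃ q : ℚ,
      w c h2 h1 < (q : ℝ) ∧ (q : ℝ) < w c h2 h1 + δ c h2 h1 :=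
    fun c h2 h1 => exists_rat_btwn (by linarith [hδ c h2 h1])
  choose q hq1 hq2 using hrat
  -- separation of intervals
  have sep : ∀ (a b : ℝ) (ha2 : g s₂ < a) (ha1 : a < g s₁) (hb2 : g s₂ < b)
      (hb1 : b < g s₁), a < b → w b hb2 hb1 + δ b hb2 hb1 ≤ w a ha2 ha1 := by
    intro a b ha2 ha1 hb2 hb1 hab
    have h1 : w b hb2 hb1 ≤ w a ha2 ha1 := by
      by_contra hh
      push_neg at hh
      have h2 := hlow b hb2 hb1 (w a ha2 ha1) (hsw a ha2 ha1).le hh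
      rw [hgw a ha2 ha1] at h2
      linarith
    have h2 : w b hb2 hb1 < w a ha2 ha1 := by
      rcases eq_or_lt_of_le h1 with he | hgt
      · exfalso
        have := hgw a ha2 ha1
        rw [← he, hgw b hb2 hb1] at this
        linarith
      · exact hgt
    by_contra hh
    push_neg at hh
    have h3 := hup b hb2 hb1 (w a ha2 ha1 - w b hb2 hb1) (by linarith) (by linarith)
    rw [show w b hb2 hb1 + (w a ha2 ha1 - w b hb2 hb1) = w a ha2 ha1 by ring,
      hgw a ha2 ha1] at h3
    linarith
  -- injection into ℚ
  set S : Set ℝ := Set.Ioo (g s₂) (g s₁) with hS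
  have hinj : Function.Injective (fun x : S => q x.1 x.2.1 x.2.2) := by
    rintro ⟨a, ha⟩ ⟨b, hb⟩ hab
    simp only [Subtype.mk_eq_mk]
    by_contra hne
    have hab' : (q a ha.1 ha.2 : ℝ) = (q b hb.1 hb.2 : ℝ) := by
      exact_mod_cast congrArg (fun x : ℚ => (x : ℝ)) hab
    rcases lt_or_gt_of_ne hne with hlt' | hlt'
    · have := sep a b ha.1 ha.2 hb.1 hb.2 hlt'
      linarith [hq1 a ha.1 ha.2, hq2 b hb.1 hb.2]
    · have := sep b a hb.1 hb.2 ha.1 ha.2 hlt'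
      linarith [hq1 b hb.1 hb.2, hq2 a ha.1 ha.2]
  have hcountS : S.Countable := Set.countable_coe_iff.mp hinj.countable
  have hmk : (Cardinal.mk S) = Cardinal.continuum := Cardinal.mk_Ioo_real hg21
  have : Cardinal.continuum ≤ Cardinal.aleph0 := by
    rw [← hmk, Cardinal.le_aleph0_iff_set_countable]
    exact hcountS
  exact absurd this (not_le.2 Cardinal.aleph0_lt_continuum)
end

section
/- Let X be a metric space, let φ : X × [0,∞) → X be continuous, and let C^g : X → [0,∞) be lower semicontinuous. Endow [0,∞] with its usual topology (the one-point compactification of [0,∞)). Then the map (x,θ) ↦ ∫_{(0,θ]} C^g(φ(x,u)) du, with values in [0,∞] (where for θ = ∞ the integral is taken over (0,∞)), is lower semicontinuous on X × [0,∞]. -/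
/-!
Up to a single point, the domain of integration `{0 < u, u ≤ θ}` can be replaced by
`{0 < u, u < θ}`, which is open in `θ`. The integrand then becomes, for each fixed `u`, the
indicator of an open set times a lower semicontinuous function of `(x, θ)`, hence lower
semicontinuous, and Fatou's lemma passes lower semicontinuity through the integral.
-/

open MeasureTheory Set ENNReal NNReal Filter Topology

theorem lowerSemicontinuous_lintegral {Y α : Type*} [TopologicalSpace Y]
    [FirstCountableTopology Y] [MeasurableSpace α] {μ : Measure α} {f : Y → α → ℝ≥0∞}
    (hf : ∀ a, LowerSemicontinuous fun y => f y a) (hmeas : ∀ y, AEMeasurable (f y) μ) :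
    LowerSemicontinuous fun y => ∫⁻ a, f y a ∂μ :=
  lowerSemicontinuous_iff_le_liminf.2 fun y =>
    calc ∫⁻ a, f y a ∂μ ≤ ∫⁻ a, liminf (fun y' => f y' a) (𝓝 y) ∂μ :=
          lintegral_mono fun a => (hf a).le_liminf y
      _ ≤ liminf (fun y' => ∫⁻ a, f y' a ∂μ) (𝓝 y) := lintegral_liminf_le' hmeas

theorem IsOpen.lowerSemicontinuous_indicator_of_lowerSemicontinuousOn {Y γ : Type*}
    [TopologicalSpace Y] [Preorder γ] [Zero γ] {s : Set Y} {f : Y → γ} (hs : IsOpen s)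
    (hf : LowerSemicontinuousOn f s) (hf₀ : 0 ≤ f) : LowerSemicontinuous (s.indicator f) := by
  intro y c hc
  by_cases hy : y ∈ s
  · rw [indicator_of_mem hy] at hc
    have hev := hf y hy c hc
    rw [hs.nhdsWithin_eq hy] at hev
    filter_upwards [hev, hs.mem_nhds hy] with z hz hzs
    rwa [indicator_of_mem hzs]
  · rw [indicator_of_notMem hy] at hc
    exact .of_forall fun z => hc.trans_le (indicator_nonneg (fun z _ => hf₀ z) z)

theorem ae_eq_setOf_ofReal_le_setOf_ofReal_lt (θ : ℝ≥0∞) :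
    {u : ℝ | 0 < u ∧ ENNReal.ofReal u ≤ θ} =ᵐ[volume]
      {u : ℝ | 0 < u ∧ ENNReal.ofReal u < θ} := by
  filter_upwards [volume.ae_ne θ.toReal] with u hu
  refine propext ⟨fun ⟨hu₀, hle⟩ => ⟨hu₀, hle.lt_of_ne fun heq => hu ?_⟩,
    fun ⟨hu₀, hlt⟩ => ⟨hu₀, hlt.le⟩⟩
  rw [← heq, toReal_ofReal hu₀.le]

theorem measurableSet_setOf_ofReal_lt (θ : ℝ≥0∞) :
    MeasurableSet {u : ℝ | 0 < u ∧ ENNReal.ofReal u < θ} :=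
  measurableSet_Ioi.inter (ENNReal.measurable_ofReal measurableSet_Iio)

/-- Let `X` be a metric space, `φ : X × [0,∞) → X` continuous, and
`C^g : X → [0,∞)` lower semicontinuous.  Then the map
`(x,θ) ↦ ∫_{(0,θ]} C^g(φ(x,u)) du`, with values in `[0,∞]` (the integral being over
`(0,∞)` when `θ = ∞`), is lower semicontinuous on `X × [0,∞]`. -/
theorem stmt_4 {X : Type*} [MetricSpace X] (φ : X → ℝ → X) (Cg : X → ℝ≥0)
    (hφ : ContinuousOn (fun p : X × ℝ => φ p.1 p.2) (univ ×ˢ Ici (0 : ℝ)))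
    (hCg : LowerSemicontinuous Cg) :
    LowerSemicontinuous (fun p : X × ℝ≥0∞ =>
      ∫⁻ u in {u : ℝ | 0 < u ∧ ENNReal.ofReal u ≤ p.2},
        (Cg (φ p.1 u) : ℝ≥0∞) ∂volume) := by
  borelize X
  have hCg' : LowerSemicontinuous fun x => (Cg x : ℝ≥0∞) :=
    ENNReal.continuous_coe.comp_lowerSemicontinuous hCg fun _ _ => ENNReal.coe_le_coe.2
  have hφ_left : ∀ u, 0 ≤ u → Continuous fun x => φ x u := fun u hu =>
    hφ.comp_continuous (continuous_id.prodMk continuous_const) fun x => ⟨mem_univ x, hu⟩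
  have hφ_right : ∀ x, ContinuousOn (φ x) (Ici 0) := fun x =>
    hφ.comp (continuous_const.prodMk continuous_id).continuousOn fun _ hu => ⟨mem_univ x, hu⟩
  simp_rw [setLIntegral_congr (ae_eq_setOf_ofReal_le_setOf_ofReal_lt _),
    ← lintegral_indicator (measurableSet_setOf_ofReal_lt _)]
  refine lowerSemicontinuous_lintegral (fun u => ?_) (fun p => ?_)
  · exact IsOpen.lowerSemicontinuous_indicator_of_lowerSemicontinuousOn
      (s := {p : X × ℝ≥0∞ | 0 < u ∧ ENNReal.ofReal u < p.2})
      (f := fun p => (Cg (φ p.1 u) : ℝ≥0∞))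
      (isOpen_const.inter (isOpen_lt continuous_const continuous_snd))
      (fun p hp =>
        ((hCg'.comp (hφ_left u hp.1.le)).comp continuous_fst).lowerSemicontinuousOn _ p hp)
      (fun _ => zero_le)
  · rw [aemeasurable_indicator_iff (measurableSet_setOf_ofReal_lt _)]
    exact hCg'.measurable.comp_aemeasurable
      (((hφ_right p.1).aemeasurable measurableSet_Ici).mono_measure
        (Measure.restrict_mono (fun u hu => hu.1.le) le_rfl))
end

section
/- Fix β, γ ∈ (0,∞) with β ≠ γ, and initial data x¹₀, x²₀ ∈ (0,∞). Define, for t ∈ [0,∞), x¹(t) := x¹₀ (1 + x²₀/x¹₀)^{β/(β−γ)} · (1 + (x²₀/x¹₀) e^{(β−γ)t})^{−β/(β−γ)} and x²(t) := x²₀ (1 + x²₀/x¹₀)^{β/(β−γ)} · e^{(β−γ)t} · (1 + (x²₀/x¹₀) e^{(β−γ)t})^{−β/(β−γ)}. Then x¹(0) = x¹₀, x²(0) = x²₀, x¹(t) > 0 and x²(t) > 0 for all t ≥ 0, and for every t ≥ 0 the derivatives satisfy (x¹)′(t) = −β x¹(t)x²(t)/(x¹(t)+x²(t)) and (x²)′(t)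 = β x¹(t)x²(t)/(x¹(t)+x²(t)) − γ x²(t). -/
/-- Explicit solution of the SIR dynamics when `β ≠ γ`:
with `x¹(t) = x¹₀(1 + x²₀/x¹₀)^{β/(β−γ)}(1 + (x²₀/x¹₀)e^{(β−γ)t})^{−β/(β−γ)}` and
`x²(t) = x²₀(1 + x²₀/x¹₀)^{β/(β−γ)} e^{(β−γ)t}(1 + (x²₀/x¹₀)e^{(β−γ)t})^{−β/(β−γ)}`,
we have `x¹(0) = x¹₀`, `x²(0) = x²₀`, positivity for all `t ≥ 0`, and the SIR ODEs
`(x¹)′ = −βx¹x²/(x¹+x²)`, `(x²)′ = βx¹x²/(x¹+x²) − γx²` hold for all `t ≥ 0`. -/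
theorem stmt_9 (β γ x10 x20 : ℝ) (hβ : 0 < β) (hγ : 0 < γ) (hne : β ≠ γ)
    (h10 : 0 < x10) (h20 : 0 < x20) (x1 x2 : ℝ → ℝ)
    (hx1 : ∀ t : ℝ, x1 t = x10 * (1 + x20 / x10) ^ (β / (β - γ)) *
      (1 + (x20 / x10) * Real.exp ((β - γ) * t)) ^ (-(β / (β - γ))))
    (hx2 : ∀ t : ℝ, x2 t = x20 * (1 + x20 / x10) ^ (β / (β - γ)) *
      Real.exp ((β - γ) * t) *
      (1 + (x20 / x10) * Real.exp ((β - γ) * t)) ^ (-(β / (β - γ)))) :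
    x1 0 = x10 ∧ x2 0 = x20 ∧
    (∀ t : ℝ, 0 ≤ t → 0 < x1 t ∧ 0 < x2 t) ∧
    (∀ t : ℝ, 0 ≤ t →
      HasDerivAt x1 (-(β * (x1 t * x2 t) / (x1 t + x2 t))) t ∧
      HasDerivAt x2 (β * (x1 t * x2 t) / (x1 t + x2 t) - γ * x2 t) t) := by
  have ha : β - γ ≠ 0 := sub_ne_zero.mpr hne
  have hc : 0 < x20 / x10 := div_pos h20 h10
  set a := β - γ with ha_def
  set c := x20 / x10 with hc_def
  set p := β / a with hp_def
  have hpa : p * a = β := div_mul_cancel₀ β ha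
  have hγ' : γ = p * a - a := by rw [hpa, ha_def]; ring
  have hc10 : x20 = c * x10 := (div_mul_cancel₀ x20 h10.ne').symm
  have h1c : (0:ℝ) < 1 + c := by linarith
  have hK : 0 < (1 + c) ^ p := Real.rpow_pos_of_pos h1c p
  have hUpos : ∀ s : ℝ, 0 < 1 + c * Real.exp (a * s) := by
    intro s; positivity
  have hQpos : ∀ s : ℝ, 0 < (1 + c * Real.exp (a * s)) ^ (-p) :=
    fun s => Real.rpow_pos_of_pos (hUpos s) _
  refine ⟨?_, ?_, ?_, ?_⟩
  · rw [hx1 0]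
    simp only [mul_zero, Real.exp_zero, mul_one]
    rw [mul_assoc, ← Real.rpow_add h1c]
    simp
  · rw [hx2 0]
    simp only [mul_zero, Real.exp_zero, mul_one]
    rw [mul_assoc, ← Real.rpow_add h1c]
    simp
  · intro t _
    constructor
    · rw [hx1 t]; positivity
    · rw [hx2 t]; positivity
  · intro t _
    set E := Real.exp (a * t) with hE_def
    have hEpos : 0 < E := Real.exp_pos _
    have hU : 0 < 1 + c * E := by rw [hE_def]; exact hUpos t
    have hQ : 0 < (1 + c * E) ^ (-p) := Real.rpow_pos_of_pos hU _
    have hDE : HasDerivAt (fun s : ℝ => Real.exp (a * s)) (a * E) t := by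
      simpa [hE_def, mul_comm] using ((hasDerivAt_id t).const_mul a).exp
    have hDU : HasDerivAt (fun s : ℝ => 1 + c * Real.exp (a * s)) (c * (a * E)) t :=
      (hDE.const_mul c).const_add 1
    have hDV : HasDerivAt (fun s : ℝ => (1 + c * Real.exp (a * s)) ^ (-p))
        (-p * (1 + c * E) ^ (-p - 1) * (c * (a * E))) t := by
      have h := hDU.rpow_const (p := -p) (Or.inl hU.ne')
      convert h using 1
      rw [hE_def]
      ring
    have hsub : (1 + c * E) ^ (-p - 1) = (1 + c * E) ^ (-p) / (1 + c * E) := by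
      rw [Real.rpow_sub hU, Real.rpow_one]
    have hsum : x1 t + x2 t =
        x10 * (1 + c) ^ p * (1 + c * E) ^ (-p) * (1 + c * E) := by
      rw [hx1 t, hx2 t, ← hE_def, hc10]; ring
    constructor
    · have key : HasDerivAt x1
          (x10 * (1 + c) ^ p * (-p * (1 + c * E) ^ (-p - 1) * (c * (a * E)))) t := by
        have hfun : x1 = fun s => x10 * (1 + c) ^ p *
            ((1 + c * Real.exp (a * s)) ^ (-p)) := funext fun s => hx1 s
        rw [hfun]
        exact hDV.const_mul _
      have e1 : x10 * (1 + c) ^ p * (-p * (1 + c * E) ^ (-p - 1) * (c * (a * E)))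
          = -(β * (x1 t * x2 t) / (x1 t + x2 t)) := by
        rw [hsum, hx1 t, hx2 t, ← hE_def, hsub, hc10, ← hpa]
        field_simp
      rwa [e1] at key
    · have key : HasDerivAt x2
          (x20 * (1 + c) ^ p * (a * E * (1 + c * E) ^ (-p)
            + E * (-p * (1 + c * E) ^ (-p - 1) * (c * (a * E))))) t := by
        have hfun : x2 = fun s => x20 * (1 + c) ^ p *
            (Real.exp (a * s) * (1 + c * Real.exp (a * s)) ^ (-p)) :=
          funext fun s => by rw [hx2 s]; ring
        rw [hfun]
        exact (hDE.mul hDV).const_mul _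
      have e2 : x20 * (1 + c) ^ p * (a * E * (1 + c * E) ^ (-p)
            + E * (-p * (1 + c * E) ^ (-p - 1) * (c * (a * E))))
          = β * (x1 t * x2 t) / (x1 t + x2 t) - γ * x2 t := by
        rw [hsum, hx1 t, hx2 t, ← hE_def, hsub, hc10, ← hpa, hγ']
        field_simp
        ring
      rwa [e2] at key
end

section
/- Fix β, γ ∈ (0,∞). Let x¹, x² : [0,∞) → (0,∞) be differentiable functions satisfying, for all t ≥ 0, (x¹)′(t) = −β x¹(t)x²(t)/(x¹(t)+x²(t)) and (x²)′(t) = β x¹(t)x²(t)/(x¹(t)+x²(t)) − γ x²(t). Then for every t ≥ 0 one has x²(t)/x¹(t) = (x²(0)/x¹(0)) · e^{(β−γ)t}. -/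
open Set

/- Along the SIR flow the infection term cancels in the logarithmic derivative of the ratio:
`(x²/x¹)′/(x²/x¹) = (x²)′/x² − (x¹)′/x¹ = β − γ`, so `x²/x¹` solves `r′ = (β − γ) r`, whose
solutions are exponentials because `r(t) e^{−(β−γ)t}` has zero derivative. -/

theorem eq_mul_exp_of_hasDerivWithinAt_Ici {f : ℝ → ℝ} {c a : ℝ}
    (hf : ∀ t, a ≤ t → HasDerivWithinAt f (c * f t) (Ici a) t) :
    ∀ t, a ≤ t → f t = f a * Real.exp (c * (t - a)) := by
  set g : ℝ → ℝ := fun t => f t * Real.exp (-(c * (t - a)))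
  have hg : ∀ t, a ≤ t → HasDerivWithinAt g 0 (Ici a) t := by
    intro t ht
    have he : HasDerivAt (fun t => Real.exp (-(c * (t - a))))
        (Real.exp (-(c * (t - a))) * -(c * 1)) t :=
      ((((hasDerivAt_id t).sub_const a).const_mul c).neg).exp
    refine ((hf t ht).mul he.hasDerivWithinAt).congr_deriv ?_
    ring
  intro t ht
  have hgt := constant_of_has_deriv_right_zero (a := a) (b := t) (f := g)
      (fun u hu => (hg u hu.1).continuousWithinAt.mono Icc_subset_Ici_self)
      (fun u hu => (hg u hu.1).mono (Ici_subset_Ici.mpr hu.1)) t (right_mem_Icc.mpr ht)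
  simp only [g, sub_self, mul_zero, neg_zero, Real.exp_zero, mul_one] at hgt
  rw [← hgt, mul_assoc, ← Real.exp_add, neg_add_cancel, Real.exp_zero, mul_one]

theorem sir_ratio_hasDerivWithinAt {β γ : ℝ} {x1 x2 : ℝ → ℝ} {s : Set ℝ} {t : ℝ}
    (hpos1 : 0 < x1 t) (hpos2 : 0 < x2 t)
    (hd1 : HasDerivWithinAt x1 (-(β * (x1 t * x2 t) / (x1 t + x2 t))) s t)
    (hd2 : HasDerivWithinAt x2 (β * (x1 t * x2 t) / (x1 t + x2 t) - γ * x2 t) s t) :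
    HasDerivWithinAt (fun u => x2 u / x1 u) ((β - γ) * (x2 t / x1 t)) s t := by
  have hsum : x1 t + x2 t ≠ 0 := by positivity
  refine (hd2.div hd1 hpos1.ne').congr_deriv ?_
  field_simp
  ring

theorem stmt_11_general (β γ : ℝ) (x1 x2 : ℝ → ℝ)
    (hpos1 : ∀ t : ℝ, 0 ≤ t → 0 < x1 t) (hpos2 : ∀ t : ℝ, 0 ≤ t → 0 < x2 t)
    (hd1 : ∀ t : ℝ, 0 ≤ t →
      HasDerivWithinAt x1 (-(β * (x1 t * x2 t) / (x1 t + x2 t))) (Ici (0 : ℝ)) t)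
    (hd2 : ∀ t : ℝ, 0 ≤ t →
      HasDerivWithinAt x2 (β * (x1 t * x2 t) / (x1 t + x2 t) - γ * x2 t) (Ici (0 : ℝ)) t) :
    ∀ t : ℝ, 0 ≤ t → x2 t / x1 t = x2 0 / x1 0 * Real.exp ((β - γ) * t) := by
  intro t ht
  simpa only [sub_zero] using eq_mul_exp_of_hasDerivWithinAt_Ici (f := fun u => x2 u / x1 u)
    (fun u hu => sir_ratio_hasDerivWithinAt (hpos1 u hu) (hpos2 u hu) (hd1 u hu) (hd2 u hu)) t ht

/-- If `x¹, x² : [0,∞) → (0,∞)` are differentiable and satisfy the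
SIR dynamics `(x¹)′ = −βx¹x²/(x¹+x²)`, `(x²)′ = βx¹x²/(x¹+x²) − γx²`, then
`x²(t)/x¹(t) = (x²(0)/x¹(0))·e^{(β−γ)t}` for every `t ≥ 0`. -/
theorem stmt_11 (β γ : ℝ) (hβ : 0 < β) (hγ : 0 < γ) (x1 x2 : ℝ → ℝ)
    (hpos1 : ∀ t : ℝ, 0 ≤ t → 0 < x1 t) (hpos2 : ∀ t : ℝ, 0 ≤ t → 0 < x2 t)
    (hd1 : ∀ t : ℝ, 0 ≤ t →
      HasDerivWithinAt x1 (-(β * (x1 t * x2 t) / (x1 t + x2 t))) (Ici (0 : ℝ)) t)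
    (hd2 : ∀ t : ℝ, 0 ≤ t →
      HasDerivWithinAt x2 (β * (x1 t * x2 t) / (x1 t + x2 t) - γ * x2 t) (Ici (0 : ℝ)) t) :
    ∀ t : ℝ, 0 ≤ t → x2 t / x1 t = x2 0 / x1 0 * Real.exp ((β - γ) * t) :=
  stmt_11_general β γ x1 x2 hpos1 hpos2 hd1 hd2
end

section
/- Let 0 < β < γ and 0 < c < β/(γ−β) (so that β + βc − γc > 0). Define w* := (β + βc − γc)/(γc) and, for w > −1, Υ(w) := c·w − 1 + ( γc(1+w)/(β+βc) )^{−β/(γ−β)} · (1+c)(γ−β)/γ. Then Υ is strictly convex on (−1,∞), Υ(w*) = 0, the derivative Υ′(w*) = 0, and consequently Υ(w) > 0 for every w > w*. -/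
open Set

/-!
With `a = γc/(β+βc)`, `p = -β/(γ-β)` and `K = (1+c)(γ-β)/γ` one has `Υ(w) = cw - 1 + K (a(1+w))^p`
and `p a K = -c`, so `Υ'(w) = c (1 - (a(1+w))^(p-1))`. Since `p < 1` this derivative is strictly
increasing, whence strict convexity. The point `w*` is exactly where `a(1+w*) = 1`, so `Υ'(w*) = 0`,
and a strictly convex function lies strictly above its value at a critical point.
-/

lemma StrictConvexOn.lt_of_hasDerivAt_eq_zero {S : Set ℝ} {f : ℝ → ℝ} {x y : ℝ}
    (hf : StrictConvexOn ℝ S f) (hx : x ∈ S) (hy : y ∈ S) (hxy : x < y)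
    (hf' : HasDerivAt f 0 x) : f x < f y := by
  have hslope := hf.lt_slope_of_hasDerivAt hx hy hxy hf'
  rw [slope_def_field, div_pos_iff_of_pos_right (sub_pos.2 hxy)] at hslope
  linarith

noncomputable def upsilon (c a p K : ℝ) (w : ℝ) : ℝ :=
  c * w - 1 + (a * (1 + w)) ^ p * K

namespace upsilon

variable {c a p K : ℝ}

lemma hasDerivAt (hK : p * a * K = -c) {w : ℝ} (hw : 0 < a * (1 + w)) :
    HasDerivAt (upsilon c a p K) (c * (1 - (a * (1 + w)) ^ (p - 1))) w := by
  have hbase : HasDerivAt (fun w : ℝ => a * (1 + w)) a w := by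
    simpa using ((hasDerivAt_id w).const_add (1 : ℝ)).const_mul a
  have h : HasDerivAt (upsilon c a p K) (c * 1 + a * p * (a * (1 + w)) ^ (p - 1) * K) w :=
    (((hasDerivAt_id w).const_mul c).sub_const 1).add
      ((hbase.rpow_const (Or.inl hw.ne')).mul_const K)
  exact h.congr_deriv (by linear_combination (a * (1 + w)) ^ (p - 1) * hK)

lemma hasDerivAt_eq_zero (hK : p * a * K = -c) {w : ℝ} (hw : a * (1 + w) = 1) :
    HasDerivAt (upsilon c a p K) 0 w := by
  simpa [hw] using hasDerivAt hK (hw.symm ▸ one_pos : 0 < a * (1 + w))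

lemma strictConvexOn (hc : 0 < c) (ha : 0 < a) (hp : p < 1) (hK : p * a * K = -c) :
    StrictConvexOn ℝ (Ioi (-1)) (upsilon c a p K) := by
  have hpos : ∀ w ∈ Ioi (-1 : ℝ), 0 < a * (1 + w) := fun w hw =>
    mul_pos ha (by linarith [mem_Ioi.mp hw])
  apply StrictMonoOn.strictConvexOn_of_deriv (convex_Ioi _)
    fun w hw => (hasDerivAt hK (hpos w hw)).continuousAt.continuousWithinAt
  rw [interior_Ioi]
  intro x hx y hy hxy
  rw [(hasDerivAt hK (hpos x hx)).deriv, (hasDerivAt hK (hpos y hy)).deriv]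
  have hlt : a * (1 + x) < a * (1 + y) := by gcongr
  exact mul_lt_mul_of_pos_left
    (sub_lt_sub_left (Real.rpow_lt_rpow_of_neg (hpos x hx) hlt (sub_neg.2 hp)) 1) hc

end upsilon

/-- Let `0 < β < γ` and `0 < c < β/(γ−β)` (so `β + βc − γc > 0`).
Put `w* := (β + βc − γc)/(γc)` and, for `w > −1`,
`Υ(w) := c·w − 1 + (γc(1+w)/(β+βc))^{−β/(γ−β)}·(1+c)(γ−β)/γ`.  Then `Υ` is strictly
convex on `(−1,∞)`, `Υ(w*) = 0`, `Υ′(w*) = 0`, and `Υ(w) > 0` for every `w > w*`. -/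
theorem stmt_15 (β γ c : ℝ) (hβ : 0 < β) (hβγ : β < γ) (hc0 : 0 < c)
    (hc : c < β / (γ - β)) (Υ : ℝ → ℝ)
    (hΥ : ∀ w : ℝ, -1 < w → Υ w = c * w - 1 +
      (γ * c * (1 + w) / (β + β * c)) ^ (-(β / (γ - β))) * ((1 + c) * (γ - β) / γ)) :
    StrictConvexOn ℝ (Ioi (-1 : ℝ)) Υ ∧
    Υ ((β + β * c - γ * c) / (γ * c)) = 0 ∧
    HasDerivAt Υ 0 ((β + β * c - γ * c) / (γ * c)) ∧
    ∀ w : ℝ, (β + β * c - γ * c) / (γ * c) < w → 0 < Υ w := by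
  have hγβ : 0 < γ - β := sub_pos.2 hβγ
  have hγ : 0 < γ := hβ.trans hβγ
  have hβc : 0 < β + β * c := by positivity
  have hnum : 0 < β + β * c - γ * c := by nlinarith [(lt_div_iff₀ hγβ).mp hc]
  set a := γ * c / (β + β * c)
  set p := -(β / (γ - β))
  set K := (1 + c) * (γ - β) / γ
  set w₀ := (β + β * c - γ * c) / (γ * c)
  have hp : p < 1 := by linarith [div_pos hβ hγβ]
  have hK : p * a * K = -c := by simp only [p, a, K]; field_simp
  have haw₀ : a * (1 + w₀) = 1 := by simp only [a, w₀]; field_simp; ring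
  have hw₀ : w₀ ∈ Ioi (-1) := neg_one_lt_zero.trans (by positivity : (0 : ℝ) < w₀)
  have hEq : EqOn (upsilon c a p K) Υ (Ioi (-1)) := fun w hw => by
    rw [hΥ w hw, upsilon, mul_div_right_comm]
  have hconv : StrictConvexOn ℝ (Ioi (-1)) Υ :=
    (upsilon.strictConvexOn hc0 (by positivity) hp hK).congr hEq
  have hval : Υ w₀ = 0 := by
    rw [← hEq hw₀, upsilon, haw₀, Real.one_rpow]
    simp only [w₀, K]; field_simp; ring
  have hder : HasDerivAt Υ 0 w₀ :=
    (upsilon.hasDerivAt_eq_zero hK haw₀).congr_of_eventuallyEq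
      (Filter.eventuallyEq_of_mem (Ioi_mem_nhds hw₀) hEq.symm)
  refine ⟨hconv, hval, hder, fun w hw => ?_⟩
  simpa [hval] using hconv.lt_of_hasDerivAt_eq_zero hw₀ (hw₀.out.trans hw) hw hder
end

section
/- Let 0 < β < γ and 0 < c < β/(γ−β), and set p := β/(γ−β). Define V : (0,∞)² → ℝ by V(x¹,x²) := x¹·[ 1 − ( γc(1 + x²/x¹)/(β+βc) )^{−p} · (1+c)(γ−β)/γ ]. Then V has partial derivatives at every point of (0,∞)², and for all x¹, x² > 0 the first-order Bellman identity holds: β x¹x²/(x¹+x²) + (∂V/∂x¹)(x¹,x²)·( −β x¹x²/(x¹+x²) ) + (∂V/∂x²)(x¹,x²)·( β x¹x²/(x¹+x²) − γ x² ) = 0. -/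
/-! Write `V = x¹ (1 - K g)` with `g = (b (1 + x²/x¹) / d)^q`. The term `x¹` alone contributes
`F - F = 0` to the Bellman expression (`F` the infection rate), and the rest collapses to
`K g x¹x²/(x¹+x²) · (β + q (γ - β))`, which vanishes exactly for `q = -β/(γ-β)`, whatever
the constants `b, d > 0` and `K`. -/

open Real

namespace SIR

variable {b d q K x₁ x₂ : ℝ}

theorem hasDerivAt_value_fst (hb : 0 < b) (hd : 0 < d) (hx₁ : 0 < x₁) (hx₂ : 0 < x₂) :
    HasDerivAt (fun y => y * (1 - (b * (1 + x₂ / y) / d) ^ q * K))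
      (1 - K * (b * (1 + x₂ / x₁) / d) ^ q * (1 - q * x₂ / (x₁ + x₂))) x₁ := by
  have hu : 0 < b * (1 + x₂ / x₁) / d := by positivity
  have hbase : HasDerivAt (fun y => b * (1 + x₂ / y) / d) (b * (-x₂ / x₁ ^ 2) / d) x₁ := by
    have := (((hasDerivAt_id x₁).inv hx₁.ne').const_mul x₂).const_add 1
    simpa [div_eq_mul_inv] using (this.const_mul b).div_const d
  refine ((hasDerivAt_id x₁).mul
    (((hbase.rpow_const (p := q) (Or.inl hu.ne')).mul_const K).const_sub 1)).congr_deriv ?_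
  rw [rpow_sub_one hu.ne', id]
  field_simp
  ring

theorem hasDerivAt_value_snd (hb : 0 < b) (hd : 0 < d) (hx₁ : 0 < x₁) (hx₂ : 0 < x₂) :
    HasDerivAt (fun y => x₁ * (1 - (b * (1 + y / x₁) / d) ^ q * K))
      (-(K * q * (b * (1 + x₂ / x₁) / d) ^ q * x₁ / (x₁ + x₂))) x₂ := by
  have hu : 0 < b * (1 + x₂ / x₁) / d := by positivity
  have hbase : HasDerivAt (fun y => b * (1 + y / x₁) / d) (b * x₁⁻¹ / d) x₂ := by
    simpa using ((((hasDerivAt_id x₂).div_const x₁).const_add 1).const_mul b).div_const d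
  refine ((((hbase.rpow_const (p := q) (Or.inl hu.ne')).mul_const K).const_sub 1).const_mul
    x₁).congr_deriv ?_
  rw [rpow_sub_one hu.ne']
  field_simp

theorem bellman_identity {β γ g : ℝ} (hq : q * (γ - β) = -β) (hx : x₁ + x₂ ≠ 0) :
    β * (x₁ * x₂) / (x₁ + x₂)
      + (1 - K * g * (1 - q * x₂ / (x₁ + x₂))) * (-(β * (x₁ * x₂) / (x₁ + x₂)))
      + (-(K * q * g * x₁ / (x₁ + x₂))) * (β * (x₁ * x₂) / (x₁ + x₂) - γ * x₂) = 0 := by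
  field_simp
  linear_combination (K * g * x₁ * x₂ * (x₁ + x₂)) * hq

end SIR

open SIR in
theorem stmt_17_general (β γ c : ℝ) (hβ : 0 < β) (hβγ : β < γ) (hc0 : 0 < c) :
    ∀ x1 x2 : ℝ, 0 < x1 → 0 < x2 →
      ∃ d1 d2 : ℝ,
        HasDerivAt (fun y : ℝ => y * (1 -
          (γ * c * (1 + x2 / y) / (β + β * c)) ^ (-(β / (γ - β))) *
          ((1 + c) * (γ - β) / γ))) d1 x1 ∧
        HasDerivAt (fun y : ℝ => x1 * (1 -
          (γ * c * (1 + y / x1) / (β + β * c)) ^ (-(β / (γ - β))) *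
          ((1 + c) * (γ - β) / γ))) d2 x2 ∧
        β * (x1 * x2) / (x1 + x2) + d1 * (-(β * (x1 * x2) / (x1 + x2))) +
          d2 * (β * (x1 * x2) / (x1 + x2) - γ * x2) = 0 := by
  intro x1 x2 hx1 hx2
  have hγ : 0 < γ := hβ.trans hβγ
  have hγβ : γ - β ≠ 0 := (sub_pos.mpr hβγ).ne'
  exact ⟨_, _, hasDerivAt_value_fst (by positivity) (by positivity) hx1 hx2,
    hasDerivAt_value_snd (by positivity) (by positivity) hx1 hx2,
    bellman_identity (by field_simp) (by positivity)⟩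

/-- Let `0 < β < γ`, `0 < c < β/(γ−β)`, `p := β/(γ−β)`, and
`V(x¹,x²) := x¹[1 − (γc(1 + x²/x¹)/(β+βc))^{−p}·(1+c)(γ−β)/γ]` on `(0,∞)²`.  Then `V`
has partial derivatives at every point of `(0,∞)²` and the first-order Bellman identity
`βx¹x²/(x¹+x²) + ∂₁V·(−βx¹x²/(x¹+x²)) + ∂₂V·(βx¹x²/(x¹+x²) − γx²) = 0` holds. -/
theorem stmt_17 (β γ c : ℝ) (hβ : 0 < β) (hβγ : β < γ) (hc0 : 0 < c)
    (hc : c < β / (γ - β)) :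
    ∀ x1 x2 : ℝ, 0 < x1 → 0 < x2 →
      ∃ d1 d2 : ℝ,
        HasDerivAt (fun y : ℝ => y * (1 -
          (γ * c * (1 + x2 / y) / (β + β * c)) ^ (-(β / (γ - β))) *
          ((1 + c) * (γ - β) / γ))) d1 x1 ∧
        HasDerivAt (fun y : ℝ => x1 * (1 -
          (γ * c * (1 + y / x1) / (β + β * c)) ^ (-(β / (γ - β))) *
          ((1 + c) * (γ - β) / γ))) d2 x2 ∧
        β * (x1 * x2) / (x1 + x2) + d1 * (-(β * (x1 * x2) / (x1 + x2))) +
          d2 * (β * (x1 * x2) / (x1 + x2) - γ * x2) = 0 :=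
  stmt_17_general β γ c hβ hβγ hc0
end

section
/- Let 0 < β < γ and 0 < c < β/(γ−β), and for U > max(β−γ, 0) large enough that γ + U − β > 0, define ξ(U) := ( β(γ + U + cU)/(cγ(γ + U − β)) )^{(γ+U−β)/(γ+U)} − 1. Then lim_{U→∞} ξ(U) = (β + βc − γc)/(γc). -/
open Filter Topology

/-! Both the base and the exponent of `ξ(U) + 1` are quotients of affine functions of `U`,
so they converge to the ratios of the leading coefficients, `β(1 + c)/(cγ)` and `1`.
Since the limiting exponent is positive, `rpow` is jointly continuous there, and
`β(1 + c)/(cγ) - 1 = (β + βc - γc)/(γc)`. -/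

theorem tendsto_affine_div_affine_atTop {a b c d : ℝ} (hc : c ≠ 0) :
    Tendsto (fun x : ℝ => (a * x + b) / (c * x + d)) atTop (𝓝 (a / c)) := by
  have hlim : Tendsto (fun x : ℝ => (a + b * x⁻¹) / (c + d * x⁻¹)) atTop
      (𝓝 ((a + b * 0) / (c + d * 0))) :=
    (tendsto_const_nhds.add (tendsto_inv_atTop_zero.const_mul b)).div
      (tendsto_const_nhds.add (tendsto_inv_atTop_zero.const_mul d)) (by simpa using hc)
  rw [mul_zero, mul_zero, add_zero, add_zero] at hlim
  refine hlim.congr' ?_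
  filter_upwards [eventually_gt_atTop 0] with x hx
  rw [← mul_div_mul_right _ _ hx.ne']
  congr 1 <;> field_simp

theorem stmt_19_general (β γ c : ℝ) (hβ : 0 < β) (hβγ : β < γ) (hc0 : 0 < c) :
    Tendsto (fun U : ℝ =>
        (β * (γ + U + c * U) / (c * γ * (γ + U - β))) ^ ((γ + U - β) / (γ + U)) - 1)
      atTop (𝓝 ((β + β * c - γ * c) / (γ * c))) := by
  have hγ : 0 < γ := hβ.trans hβγ
  have hbase : Tendsto (fun U : ℝ => β * (γ + U + c * U) / (c * γ * (γ + U - β))) atTop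
      (𝓝 (β * (1 + c) / (c * γ))) :=
    (tendsto_affine_div_affine_atTop (b := β * γ) (d := c * γ * (γ - β))
      (by positivity : c * γ ≠ 0)).congr fun U => by ring_nf
  have hexp : Tendsto (fun U : ℝ => (γ + U - β) / (γ + U)) atTop (𝓝 1) := by
    simpa using (tendsto_affine_div_affine_atTop (a := 1) (b := γ - β) (d := γ)
      one_ne_zero).congr fun U => by ring_nf
  have hlimit : (β + β * c - γ * c) / (γ * c) = (β * (1 + c) / (c * γ)) ^ (1 : ℝ) - 1 := by
    rw [Real.rpow_one]
    field_simp
  rw [hlimit]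
  exact (hbase.rpow hexp (Or.inr one_pos)).sub_const 1

/-- Let `0 < β < γ` and `0 < c < β/(γ−β)`, and define
`ξ(U) := ( β(γ + U + cU)/(cγ(γ + U − β)) )^{(γ+U−β)/(γ+U)} − 1` (for `U` large enough
that `γ + U − β > 0`).  Then `lim_{U→∞} ξ(U) = (β + βc − γc)/(γc)`. -/
theorem stmt_19 (β γ c : ℝ) (hβ : 0 < β) (hβγ : β < γ) (hc0 : 0 < c)
    (hc : c < β / (γ - β)) :
    Tendsto (fun U : ℝ =>
        (β * (γ + U + c * U) / (c * γ * (γ + U - β))) ^ ((γ + U - β) / (γ + U)) - 1)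
      atTop (𝓝 ((β + β * c - γ * c) / (γ * c))) :=
  stmt_19_general β γ c hβ hβγ hc0
end
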